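/- arXiv:1911.12995 — 3 statements merged into one kernel-verified Lean document; each statement's English description precedes it below -/
import Mathlib

section
/- For every integer n ≥ 3, the treecut width of the complete bipartite graph K_{n,n} equals 2n − 2, i.e., tcw(K_{n,n}) = 2n − 2. -/
/-- `a` is the parent of `b` in the rooted tree/forest given by `par`. -/
def ParentRel {τ : Type} (par : τ → Option τ) (a b : τ) : Prop := par b = some a

/-- `a` is a strict ancestor of `b`. -/
def Anc {τ : Type} (par : τ → Option τ) : τ → τ → Prop :=
  Relation.TransGen (ParentRel par)

/-- The data of a treecut decomposition: a parent function on the node type `τ`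
(describing the rooted tree) together with a labelling `χ` of nodes by vertex sets. -/
structure PreDecomp (V τ : Type) where
  parent : τ → Option τ
  χ : τ → Set V

/-- `(T, χ)` is a treecut decomposition: the tree is acyclic with a unique root,
and the sets `χ t` form a near-partition of `V` (pairwise disjoint, covering,
empty sets allowed). -/
def IsTCDecomp {V τ : Type} (D : PreDecomp V τ) : Prop :=
  (∀ t, ¬ Anc D.parent t t) ∧ (∃! r, D.parent r = none) ∧ (∀ v : V, ∃! t, v ∈ D.χ t)

/-- The nodes in the subtree rooted at `t` (including `t` itself). -/
def subtreeNodes {τ : Type} (par : τ → Option τ) (t : τ) : Set τ :=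
  {s | s = t ∨ Anc par t s}

/-- `V_t`: the union of `χ s` over the nodes `s` of the subtree rooted at `t`. -/
def subtreeSet {V τ : Type} (D : PreDecomp V τ) (t : τ) : Set V :=
  ⋃ s ∈ subtreeNodes D.parent t, D.χ s

/-- The number of edges of `G` with exactly one endpoint in `S`
(each such edge is counted once, as the ordered pair (inside, outside)). -/
noncomputable def cutsize {V : Type} (G : SimpleGraph V) (S : Set V) : ℕ :=
  {p : V × V | G.Adj p.1 p.2 ∧ p.1 ∈ S ∧ p.2 ∉ S}.ncard

/-- The adhesion of a node `t`: the number of edges leaving `V_t`. -/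
noncomputable def adhesion {V τ : Type} (G : SimpleGraph V) (D : PreDecomp V τ) (t : τ) : ℕ :=
  cutsize G (subtreeSet D t)

/-- The torsowidth of `t`: `|χ t|` plus the number of neighbours of `t` in the tree. -/
noncomputable def torsowidth {V τ : Type} (D : PreDecomp V τ) (t : τ) : ℕ :=
  (D.χ t).ncard + {s | D.parent s = some t ∨ D.parent t = some s}.ncard

/-- The treecut decomposition has width at most `w`. -/
def WidthLE {V τ : Type} (G : SimpleGraph V) (D : PreDecomp V τ) (w : ℕ) : Prop :=
  ∀ t, adhesion G D t ≤ w ∧ torsowidth D t ≤ w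

/-- The height of node `t`: the number of nodes on the path from the root to `t`,
i.e. one plus the number of strict ancestors of `t`. -/
noncomputable def nodeDepth {τ : Type} (par : τ → Option τ) (t : τ) : ℕ :=
  Nat.card {a // Anc par a t} + 1

/-- The treecut width of a graph `G`: the least `w` such that `G` has a
treecut decomposition of width at most `w`. -/
noncomputable def tcw {V : Type} [Finite V] (G : SimpleGraph V) : ℕ :=
  sInf {w | ∃ (τ : Type) (_ : Finite τ) (D : PreDecomp V τ), IsTCDecomp D ∧ WidthLE G D w}

/-!
Upper bound: hang the `n` pairs `{aᵢ, bᵢ}` as leaves below a root with an empty bag. A leaf has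
adhesion `2(n - 1)` and torsowidth `3`, the root has torsowidth `n`.

Lower bound: a vertex set with `p` vertices on one side and `q` on the other is cut by
`p(n - q) + q(n - p)` edges, which is at least `2n - 2` unless `p + q ≤ 1` or `p + q ≥ 2n - 1`.
So in a decomposition of width `< 2n - 2` every `V_t` has at most one or at least `2n - 1`
vertices. A lowest node `t` of the second kind has children of the first kind only, hence
`2n - 1 ≤ |V_t| ≤ |χ(t)| + #children ≤ torsowidth(t)`, a contradiction.
-/

section Tree

variable {τ : Type} {par : τ → Option τ}

theorem wellFounded_anc [Finite τ] (h : ∀ t, ¬ Anc par t t) : WellFounded (Anc par) :=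
  haveI : IsTrans τ (Anc par) := ⟨fun _ _ _ => Relation.TransGen.trans⟩
  haveI : Std.Irrefl (Anc par) := ⟨h⟩
  Finite.wellFounded_of_trans_of_irrefl _

theorem wellFounded_flip_anc [Finite τ] (h : ∀ t, ¬ Anc par t t) : WellFounded (flip (Anc par)) :=
  haveI : IsTrans τ (flip (Anc par)) := ⟨fun _ _ _ h₁ h₂ => Relation.TransGen.trans h₂ h₁⟩
  haveI : Std.Irrefl (flip (Anc par)) := ⟨h⟩
  Finite.wellFounded_of_trans_of_irrefl _

theorem mem_subtreeNodes_of_parent_eq_none [Finite τ] (hacyc : ∀ t, ¬ Anc par t t) {r : τ}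
    (hr : ∀ s, par s = none → s = r) (t : τ) : t ∈ subtreeNodes par r := by
  induction t using (wellFounded_anc hacyc).induction with
  | _ t ih =>
    cases hpt : par t with
    | none => exact Or.inl (hr t hpt)
    | some a =>
      have hat : Anc par a t := .single hpt
      rcases ih a hat with rfl | hra
      · exact Or.inr hat
      · exact Or.inr (hra.trans hat)

theorem exists_child_of_anc {t s : τ} (h : Anc par t s) :
    ∃ c, par c = some t ∧ s ∈ subtreeNodes par c := by
  induction h using Relation.TransGen.head_induction_on with
  | single hc => exact ⟨s, hc, Or.inl rfl⟩
  | head hc hcs _ => exact ⟨_, hc, Or.inr hcs⟩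

variable {V : Type}

theorem subtreeSet_eq_univ_of_parent_eq_none {D : PreDecomp V τ} [Finite τ] (hD : IsTCDecomp D) {r : τ}
    (hr : D.parent r = none) : subtreeSet D r = Set.univ := by
  obtain ⟨hacyc, ⟨r', -, hr'⟩, hχ⟩ := hD
  have hroot : ∀ s, D.parent s = none → s = r := fun s hs => (hr' s hs).trans (hr' r hr).symm
  refine Set.eq_univ_of_forall fun v => ?_
  obtain ⟨t, hvt, -⟩ := hχ v
  exact Set.mem_biUnion (mem_subtreeNodes_of_parent_eq_none hacyc hroot t) hvt

theorem subtreeSet_subset_union_children (D : PreDecomp V τ) (t : τ) :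
    subtreeSet D t ⊆ D.χ t ∪ ⋃ c ∈ {c | D.parent c = some t}, subtreeSet D c := by
  intro v hv
  obtain ⟨s, hs, hvs⟩ := Set.mem_iUnion₂.mp hv
  rcases hs with rfl | hts
  · exact Or.inl hvs
  · obtain ⟨c, hc, hsc⟩ := exists_child_of_anc hts
    exact Or.inr (Set.mem_biUnion hc (Set.mem_biUnion hsc hvs))

theorem ncard_subtreeSet_le_torsowidth [Finite V] [Finite τ] (D : PreDecomp V τ) (t : τ)
    (h : ∀ c, D.parent c = some t → (subtreeSet D c).ncard ≤ 1) :
    (subtreeSet D t).ncard ≤ torsowidth D t := by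
  set C : Set τ := {c | D.parent c = some t}
  have hC := C.toFinite
  have hunion : ⋃ c ∈ C, subtreeSet D c = ⋃ c ∈ hC.toFinset, subtreeSet D c := by
    simp only [Set.Finite.mem_toFinset]
  calc (subtreeSet D t).ncard
      ≤ (D.χ t ∪ ⋃ c ∈ hC.toFinset, subtreeSet D c).ncard :=
        hunion ▸ Set.ncard_le_ncard (subtreeSet_subset_union_children D t)
    _ ≤ (D.χ t).ncard + ∑ c ∈ hC.toFinset, (subtreeSet D c).ncard :=
        (Set.ncard_union_le _ _).trans (Nat.add_le_add_left (Finset.set_ncard_biUnion_le _ _) _)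
    _ ≤ (D.χ t).ncard + C.ncard := by
        refine Nat.add_le_add_left ?_ _
        rw [Set.ncard_eq_toFinset_card C hC]
        simpa using Finset.sum_le_card_nsmul _ _ 1 fun c hc => h c (hC.mem_toFinset.mp hc)
    _ ≤ torsowidth D t :=
        Nat.add_le_add_left (Set.ncard_le_ncard (fun s hs => Or.inl hs)) _

theorem card_sub_one_le_of_widthLE [Finite V] [Finite τ] {G : SimpleGraph V}
    {D : PreDecomp V τ} (hD : IsTCDecomp D) {w : ℕ} (hw : WidthLE G D w)
    (hcut : ∀ S : Set V, 2 ≤ S.ncard → S.ncard + 2 ≤ Nat.card V → w < cutsize G S) :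
    Nat.card V - 1 ≤ w := by
  have hdich : ∀ t, Nat.card V - 1 ≤ (subtreeSet D t).ncard ∨ (subtreeSet D t).ncard ≤ 1 := by
    intro t
    by_contra! ⟨hhi, hlo⟩
    exact (hw t).1.not_gt (hcut _ (by omega) (by omega))
  obtain ⟨r, hr, -⟩ := hD.2.1
  obtain ⟨t, ht, hmin⟩ := (wellFounded_flip_anc hD.1).has_min
    {t | Nat.card V - 1 ≤ (subtreeSet D t).ncard}
    ⟨r, by simp [subtreeSet_eq_univ_of_parent_eq_none hD hr]⟩
  have hchildren : ∀ c, D.parent c = some t → (subtreeSet D c).ncard ≤ 1 :=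
    fun c hc => (hdich c).resolve_left fun hc' => hmin c hc' (.single hc)
  calc Nat.card V - 1 ≤ (subtreeSet D t).ncard := ht
    _ ≤ torsowidth D t := ncard_subtreeSet_le_torsowidth D t hchildren
    _ ≤ w := (hw t).2

end Tree

theorem two_mul_sub_two_le_mul_sub_add_mul_sub {n p q : ℕ} (hp : p ≤ n) (hq : q ≤ n)
    (hlo : 2 ≤ p + q) (hhi : p + q + 2 ≤ 2 * n) : 2 * n - 2 ≤ p * (n - q) + q * (n - p) := by
  zify [hp, hq, show 2 ≤ 2 * n by omega]
  rcases Nat.eq_zero_or_pos p with rfl | hp0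
  · push_cast; nlinarith
  rcases Nat.eq_zero_or_pos q with rfl | hq0
  · push_cast; nlinarith
  rcases hp.eq_or_lt with rfl | hpn
  · nlinarith
  rcases hq.eq_or_lt with rfl | hqn
  · nlinarith
  -- `p * (n - q) + q * (n - p) - (2 * n - 2) = (p - 1) * (n - q - 1) + (q - 1) * (n - p - 1)`
  have h₁ : (0 : ℤ) ≤ (p - 1) * (n - q - 1) := mul_nonneg (by omega) (by omega)
  have h₂ : (0 : ℤ) ≤ (q - 1) * (n - p - 1) := mul_nonneg (by omega) (by omega)
  nlinarith

theorem cutsize_univ {V : Type} (G : SimpleGraph V) : cutsize G Set.univ = 0 := by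
  simp [cutsize]

section CompleteBipartite

variable {α β : Type}

theorem ncard_eq_ncard_preimage_inl_add [Finite α] [Finite β] (S : Set (α ⊕ β)) :
    S.ncard = (Sum.inl ⁻¹' S).ncard + (Sum.inr ⁻¹' S).ncard := by
  conv_lhs => rw [← Set.image_preimage_inl_union_image_preimage_inr S]
  rw [Set.ncard_union_eq Set.disjoint_image_inl_image_inr,
    Set.ncard_image_of_injective _ Sum.inl_injective,
    Set.ncard_image_of_injective _ Sum.inr_injective]

theorem cutsize_completeBipartiteGraph [Finite α] [Finite β] (S : Set (α ⊕ β)) :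
    cutsize (completeBipartiteGraph α β) S =
      (Sum.inl ⁻¹' S).ncard * (Sum.inr ⁻¹' S)ᶜ.ncard +
        (Sum.inr ⁻¹' S).ncard * (Sum.inl ⁻¹' S)ᶜ.ncard := by
  have hcut : {p : (α ⊕ β) × (α ⊕ β) |
      (completeBipartiteGraph α β).Adj p.1 p.2 ∧ p.1 ∈ S ∧ p.2 ∉ S} =
        (Sum.inl '' (Sum.inl ⁻¹' S)) ×ˢ (Sum.inr '' (Sum.inr ⁻¹' S)ᶜ) ∪
          (Sum.inr '' (Sum.inr ⁻¹' S)) ×ˢ (Sum.inl '' (Sum.inl ⁻¹' S)ᶜ) := by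
    ext ⟨x | x, y | y⟩ <;> simp
  rw [cutsize, hcut, Set.ncard_union_eq
      (Set.disjoint_prod.mpr (.inl Set.disjoint_image_inl_image_inr)),
    Set.ncard_prod, Set.ncard_prod]
  simp only [Set.ncard_image_of_injective _ Sum.inl_injective,
    Set.ncard_image_of_injective _ Sum.inr_injective]

theorem two_mul_sub_two_le_cutsize [Finite α] {S : Set (α ⊕ α)} (hlo : 2 ≤ S.ncard)
    (hhi : S.ncard + 2 ≤ 2 * Nat.card α) :
    2 * Nat.card α - 2 ≤ cutsize (completeBipartiteGraph α α) S := by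
  rw [ncard_eq_ncard_preimage_inl_add] at hlo hhi
  rw [cutsize_completeBipartiteGraph, Set.ncard_compl, Set.ncard_compl]
  exact two_mul_sub_two_le_mul_sub_add_mul_sub (Set.ncard_le_card _) (Set.ncard_le_card _) hlo hhi

end CompleteBipartite

section Star

variable {V ι : Type}

def starDecomp (f : V → ι) : PreDecomp V (Option ι) where
  parent t := t.map fun _ => none
  χ t := t.elim ∅ fun i => f ⁻¹' {i}

variable (f : V → ι)

theorem anc_starDecomp {a b : Option ι} (h : Anc (starDecomp f).parent a b) :
    a = none ∧ b ≠ none := by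
  have step : ∀ {a b}, ParentRel (starDecomp f).parent a b → a = none ∧ b ≠ none := by
    rintro a (_ | b) h <;> simp_all [ParentRel, starDecomp, eq_comm]
  induction h with
  | single h => exact step h
  | tail _ h ih => exact ⟨ih.1, (step h).2⟩

theorem isTCDecomp_starDecomp : IsTCDecomp (starDecomp f) := by
  refine ⟨fun t ht => ?_, ⟨none, rfl, fun t ht => ?_⟩, fun v => ⟨some (f v), rfl, fun t ht => ?_⟩⟩
  · obtain ⟨rfl, h⟩ := anc_starDecomp f ht
    exact h rfl
  · simpa [starDecomp] using ht
  · cases t <;> simp_all [starDecomp]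

theorem subtreeSet_starDecomp_some (i : ι) : subtreeSet (starDecomp f) (some i) = f ⁻¹' {i} := by
  refine Set.Subset.antisymm (Set.iUnion₂_subset fun t ht => ?_)
    fun v hv => Set.mem_biUnion (Or.inl rfl : some i ∈ subtreeNodes _ (some i)) hv
  rcases ht with rfl | ht
  · rfl
  · exact absurd (anc_starDecomp f ht).1 (Option.some_ne_none i)

theorem torsowidth_starDecomp_none [Finite ι] : torsowidth (starDecomp f) none = Nat.card ι := by
  have : {s | (starDecomp f).parent s = some none ∨ (starDecomp f).parent none = some s} =
      Set.range some := by
    ext (_ | i) <;> simp [starDecomp]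
  rw [torsowidth, this, Set.ncard_range_of_injective (Option.some_injective ι)]
  simp [starDecomp]

theorem torsowidth_starDecomp_some (i : ι) :
    torsowidth (starDecomp f) (some i) = (f ⁻¹' {i}).ncard + 1 := by
  have : {s | (starDecomp f).parent s = some (some i) ∨ (starDecomp f).parent (some i) = some s} =
      {none} := by
    ext (_ | j) <;> simp [starDecomp]
  rw [torsowidth, this, Set.ncard_singleton]
  rfl

end Star

theorem widthLE_starDecomp_completeBipartiteGraph {α : Type} [Finite α]
    (hα : 3 ≤ Nat.card α) :
    WidthLE (completeBipartiteGraph α α) (starDecomp (Sum.elim id id))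
      (2 * Nat.card α - 2) := by
  have hfibre (i : α) : (Sum.elim id id ⁻¹' {i} : Set (α ⊕ α)) = {.inl i, .inr i} := by
    ext (j | j) <;> simp [eq_comm]
  rintro (_ | i)
  · rw [adhesion, subtreeSet_eq_univ_of_parent_eq_none (isTCDecomp_starDecomp _) rfl, cutsize_univ,
      torsowidth_starDecomp_none]
    omega
  · have hpre : (Sum.inl ⁻¹' {.inl i, .inr i} : Set α) = {i} ∧
        (Sum.inr ⁻¹' {.inl i, .inr i} : Set α) = {i} := by
      constructor <;> ext <;> simp
    rw [adhesion, subtreeSet_starDecomp_some, cutsize_completeBipartiteGraph,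
      torsowidth_starDecomp_some, hfibre, hpre.1, hpre.2, Set.ncard_compl,
      Set.ncard_singleton, Set.ncard_pair Sum.inl_ne_inr]
    omega

theorem tcw_completeBipartiteGraph_self {α : Type} [Finite α] (hα : 3 ≤ Nat.card α) :
    tcw (completeBipartiteGraph α α) = 2 * Nat.card α - 2 := by
  have hstar : 2 * Nat.card α - 2 ∈ {w | ∃ (τ : Type) (_ : Finite τ) (D : PreDecomp (α ⊕ α) τ),
      IsTCDecomp D ∧ WidthLE (completeBipartiteGraph α α) D w} :=
    ⟨_, inferInstance, _, isTCDecomp_starDecomp _,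
      widthLE_starDecomp_completeBipartiteGraph hα⟩
  refine le_antisymm (Nat.sInf_le hstar) (le_csInf ⟨_, hstar⟩ ?_)
  rintro w ⟨τ, _, D, hD, hw⟩
  by_contra! hw_lt
  have := card_sub_one_le_of_widthLE hD hw fun S hlo hhi =>
    hw_lt.trans_le (two_mul_sub_two_le_cutsize hlo (by rwa [Nat.card_sum, ← two_mul] at hhi))
  rw [Nat.card_sum] at this
  omega

/-- For every `n ≥ 3`, the treecut width of the complete bipartite graph `K_{n,n}`
equals `2n - 2`. -/
theorem tcw_completeBipartiteGraph (n : ℕ) (hn : 3 ≤ n) :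
    tcw (completeBipartiteGraph (Fin n) (Fin n)) = 2 * n - 2 := by
  simpa using tcw_completeBipartiteGraph_self (α := Fin n) (by simpa using hn)
end

section
/- Let G be a graph and let (T, χ) be a treecut decomposition of G of width at most ω and height at most d such that χ(t) ≠ ∅ for each leaf t of T. Define P_1 = ∅ and, for every i with 2 ≤ i ≤ h(T) + 1, P_i = { V_t : t ∈ V(T) and the height of t in T equals h(T) − i + 2 }, where h(T) is the height of T. Then (P_1,…,P_{h(T)+1}) is a derivation of G of width at most ω and length at most d + 1. -/
/-- The children of `p` at level `i`: the sets of level `i - 1` contained in `p`. -/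
def childrenAt {V : Type} (P : ℕ → Set (Set V)) (i : ℕ) (p : Set V) : Set (Set V) :=
  {c ∈ P (i - 1) | c ⊆ p}

/-- `χ_i(p)`: the set `p` minus the union of its children at level `i`. -/
def bagAt {V : Type} (P : ℕ → Set (Set V)) (i : ℕ) (p : Set V) : Set V :=
  p \ ⋃₀ childrenAt P i p

/-- `(P 1, …, P l)` is a derivation of the vertex set `V`:
each level is a weak partition (nonempty, pairwise disjoint sets),
`P 1 = ∅`, `P l = {V}`, and each level refines the next one. -/
def IsDerivation {V : Type} (l : ℕ) (P : ℕ → Set (Set V)) : Prop :=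
  (∀ i, 1 ≤ i → i ≤ l → (∀ p ∈ P i, p.Nonempty) ∧ (P i).PairwiseDisjoint id) ∧
  P 1 = ∅ ∧ P l = {Set.univ} ∧
  (∀ i, 1 ≤ i → i < l → ∀ p ∈ P i, ∃ q ∈ P (i + 1), p ⊆ q)

/-- `tor_i(p)` for a derivation of length `l`. -/
noncomputable def torAt {V : Type} (l : ℕ) (P : ℕ → Set (Set V)) (i : ℕ) (p : Set V) : ℕ :=
  (bagAt P i p).ncard + (childrenAt P i p).ncard + (if i = l then 0 else 1)

/-- The derivation has width at most `w`: for every level `i` and every `p ∈ P i`,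
both `|δ_G(p)|` and `tor_i(p)` are at most `w`. -/
def DerWidthLE {V : Type} (G : SimpleGraph V) (l : ℕ) (P : ℕ → Set (Set V)) (w : ℕ) : Prop :=
  ∀ i, 1 ≤ i → i ≤ l → ∀ p ∈ P i, cutsize G p ≤ w ∧ torAt l P i p ≤ w

/-- The height of the tree: the maximal height of a node. -/
noncomputable def treeHeight {τ : Type} (par : τ → Option τ) : ℕ := ⨆ t, nodeDepth par t

/-- The sequence of weak partitions obtained from a treecut decomposition `D`:
level `i` consists of the sets `V_t` for the nodes `t` of height `h(T) - i + 2`. -/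
def levelSets {V τ : Type} (D : PreDecomp V τ) : ℕ → Set (Set V) :=
  fun i => {S | ∃ t, nodeDepth D.parent t = treeHeight D.parent + 2 - i ∧ S = subtreeSet D t}

/-!
Nodes of equal depth are incomparable in the tree, so their sets `V_t` are pairwise disjoint;
they are nonempty because every subtree contains a leaf. If `t` lies at level `i`, the children
of `V_t` at level `i` are exactly the sets `V_c` for the tree children `c` of `t`, and distinct
children give distinct sets. Hence `χ_i(V_t) = χ(t)`, and `tor_i(V_t)` counts `χ(t)`, the
children of `t` and, below the top level, its parent: it is the torsowidth of `t`.
-/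

open Relation

section Tree

variable {τ : Type} {par : τ → Option τ}

theorem anc_iff_of_parent_eq {a s c : τ} (hc : par c = some s) :
    Anc par a c ↔ a = s ∨ Anc par a s := by
  have hparent : ∀ b, ParentRel par b c ↔ b = s := fun b => by
    rw [ParentRel, hc, Option.some_inj, eq_comm]
  rw [Anc, TransGen.tail'_iff]
  simp only [hparent, exists_eq_right]
  rw [reflTransGen_iff_eq_or_transGen, eq_comm]

theorem nodeDepth_of_parent_eq [Finite τ] (hacyc : ∀ t, ¬ Anc par t t) {c s : τ}
    (hc : par c = some s) : nodeDepth par c = nodeDepth par s + 1 := by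
  have hanc : {a | Anc par a c} = insert s {a | Anc par a s} :=
    Set.ext fun _ => anc_iff_of_parent_eq hc
  have hs : s ∉ {a | Anc par a s} := hacyc s
  change Nat.card {a | Anc par a c} + 1 = Nat.card {a | Anc par a s} + 1 + 1
  rw [Nat.card_coe_set_eq, Nat.card_coe_set_eq, hanc, Set.ncard_insert_of_notMem hs]

theorem nodeDepth_of_parent_eq_none {r : τ} (hr : par r = none) : nodeDepth par r = 1 := by
  have hanc : ∀ a, ¬ Anc par a r := fun a h => by
    obtain ⟨b, -, hb⟩ := TransGen.tail'_iff.mp h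
    rw [ParentRel, hr] at hb
    cases hb
  simp [nodeDepth, hanc]

theorem nodeDepth_eq_one_iff [Finite τ] (hacyc : ∀ t, ¬ Anc par t t) {t : τ} :
    nodeDepth par t = 1 ↔ par t = none := by
  refine ⟨fun ht => ?_, nodeDepth_of_parent_eq_none⟩
  cases hp : par t with
  | none => rfl
  | some s => rw [nodeDepth_of_parent_eq hacyc hp] at ht; simp [nodeDepth] at ht

theorem Anc.nodeDepth_lt [Finite τ] (hacyc : ∀ t, ¬ Anc par t t) {a b : τ} (h : Anc par a b) :
    nodeDepth par a < nodeDepth par b := by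
  induction h with
  | single h => rw [nodeDepth_of_parent_eq hacyc h]; omega
  | tail _ h ih => rw [nodeDepth_of_parent_eq hacyc h]; omega

theorem nodeDepth_le_of_reflTransGen [Finite τ] (hacyc : ∀ t, ¬ Anc par t t) {a b : τ}
    (h : ReflTransGen (ParentRel par) a b) : nodeDepth par a ≤ nodeDepth par b := by
  rcases reflTransGen_iff_eq_or_transGen.mp h with rfl | h
  · exact le_rfl
  · exact (Anc.nodeDepth_lt hacyc h).le

theorem eq_of_reflTransGen_of_nodeDepth_eq [Finite τ] (hacyc : ∀ t, ¬ Anc par t t) {a b : τ}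
    (h : ReflTransGen (ParentRel par) a b) (hd : nodeDepth par a = nodeDepth par b) : a = b := by
  rcases reflTransGen_iff_eq_or_transGen.mp h with rfl | h
  · rfl
  · exact absurd hd (Anc.nodeDepth_lt hacyc h).ne

theorem parent_eq_of_reflTransGen_of_nodeDepth_eq_succ [Finite τ] (hacyc : ∀ t, ¬ Anc par t t)
    {t c : τ} (h : ReflTransGen (ParentRel par) t c)
    (hd : nodeDepth par c = nodeDepth par t + 1) : par c = some t := by
  rcases reflTransGen_iff_eq_or_transGen.mp h with rfl | h
  · omega
  · obtain ⟨b, htb, hbc⟩ := TransGen.tail'_iff.mp h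
    rw [nodeDepth_of_parent_eq hacyc hbc] at hd
    rwa [eq_of_reflTransGen_of_nodeDepth_eq hacyc htb (by omega)]

theorem reflTransGen_total_of_reflTransGen {a b x : τ} (hax : ReflTransGen (ParentRel par) a x)
    (hbx : ReflTransGen (ParentRel par) b x) :
    ReflTransGen (ParentRel par) a b ∨ ReflTransGen (ParentRel par) b a := by
  have hunique : Relator.RightUnique (Function.swap (ParentRel par)) := fun _ _ _ h h' =>
    Option.some_inj.mp (h.symm.trans h')
  rw [← reflTransGen_swap] at hax hbx
  simpa only [reflTransGen_swap, or_comm] using ReflTransGen.total_of_right_unique hunique hax hbx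

theorem reflTransGen_of_unique_root [Finite τ] (hacyc : ∀ t, ¬ Anc par t t) {r : τ}
    (hroot : ∀ t, par t = none → t = r) (t : τ) : ReflTransGen (ParentRel par) r t := by
  induction hn : nodeDepth par t using Nat.strong_induction_on generalizing t with
  | _ n ih =>
    cases hp : par t with
    | none => rw [hroot t hp]
    | some s =>
      have hs : nodeDepth par s < n := by rw [← hn, nodeDepth_of_parent_eq hacyc hp]; omega
      exact (ih _ hs s rfl).tail hp

theorem nodeDepth_le_treeHeight [Finite τ] (t : τ) : nodeDepth par t ≤ treeHeight par :=
  le_ciSup (Set.finite_range _).bddAbove t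

theorem mem_subtreeNodes_iff {s t : τ} :
    s ∈ subtreeNodes par t ↔ ReflTransGen (ParentRel par) t s := by
  rw [subtreeNodes, Set.mem_ofPred_eq, reflTransGen_iff_eq_or_transGen]
  rfl

end Tree

section Decomposition

variable {V τ : Type} {D : PreDecomp V τ}

theorem mem_subtreeSet_iff {v : V} {t : τ} :
    v ∈ subtreeSet D t ↔ ∃ s, ReflTransGen (ParentRel D.parent) t s ∧ v ∈ D.χ s := by
  simp only [subtreeSet, Set.mem_iUnion, exists_prop, mem_subtreeNodes_iff]

theorem subtreeSet_subset_of_reflTransGen {t s : τ} (h : ReflTransGen (ParentRel D.parent) t s) :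
    subtreeSet D s ⊆ subtreeSet D t := fun _ hv =>
  let ⟨u, hsu, hvu⟩ := mem_subtreeSet_iff.mp hv
  mem_subtreeSet_iff.mpr ⟨u, h.trans hsu, hvu⟩

theorem subtreeSet_eq_univ {r : τ} (hreach : ∀ t, ReflTransGen (ParentRel D.parent) r t)
    (hcover : ∀ v : V, ∃ t, v ∈ D.χ t) : subtreeSet D r = Set.univ :=
  Set.eq_univ_of_forall fun v =>
    let ⟨t, hv⟩ := hcover v
    mem_subtreeSet_iff.mpr ⟨t, hreach t, hv⟩

/-- A deepest node below `t` is a leaf, and leaves have nonempty bags. -/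
theorem subtreeSet_nonempty [Finite τ] (hacyc : ∀ t, ¬ Anc D.parent t t)
    (hleaf : ∀ t, (∀ s, D.parent s ≠ some t) → D.χ t ≠ ∅) (t : τ) :
    (subtreeSet D t).Nonempty := by
  obtain ⟨s, hs, hmax⟩ := Set.Finite.exists_maximalFor (nodeDepth D.parent)
    (subtreeNodes D.parent t) (Set.toFinite _) ⟨t, Or.inl rfl⟩
  have hs_leaf : ∀ c, D.parent c ≠ some s := fun c hc => by
    have hc_mem : c ∈ subtreeNodes D.parent t :=
      mem_subtreeNodes_iff.mpr ((mem_subtreeNodes_iff.mp hs).tail hc)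
    have := hmax hc_mem (by rw [nodeDepth_of_parent_eq hacyc hc]; omega)
    rw [nodeDepth_of_parent_eq hacyc hc] at this
    omega
  obtain ⟨v, hv⟩ := Set.nonempty_iff_ne_empty.mpr (hleaf s hs_leaf)
  exact ⟨v, mem_subtreeSet_iff.mpr ⟨s, mem_subtreeNodes_iff.mp hs, hv⟩⟩

theorem reflTransGen_total_of_subtreeSet_inter (hpart : ∀ v : V, ∃! t, v ∈ D.χ t) {t t' : τ}
    (h : (subtreeSet D t ∩ subtreeSet D t').Nonempty) :
    ReflTransGen (ParentRel D.parent) t t' ∨ ReflTransGen (ParentRel D.parent) t' t := by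
  obtain ⟨v, hv, hv'⟩ := h
  obtain ⟨s, hts, hvs⟩ := mem_subtreeSet_iff.mp hv
  obtain ⟨s', hts', hvs'⟩ := mem_subtreeSet_iff.mp hv'
  rw [(hpart v).unique hvs hvs'] at hts
  exact reflTransGen_total_of_reflTransGen hts hts'

theorem disjoint_subtreeSet_of_nodeDepth_eq [Finite τ] (hacyc : ∀ t, ¬ Anc D.parent t t)
    (hpart : ∀ v : V, ∃! t, v ∈ D.χ t) {t t' : τ} (hne : t ≠ t')
    (hd : nodeDepth D.parent t = nodeDepth D.parent t') :
    Disjoint (subtreeSet D t) (subtreeSet D t') := by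
  rw [Set.disjoint_iff_inter_eq_empty, ← Set.not_nonempty_iff_eq_empty]
  intro h
  rcases reflTransGen_total_of_subtreeSet_inter hpart h with h | h
  · exact hne (eq_of_reflTransGen_of_nodeDepth_eq hacyc h hd)
  · exact hne (eq_of_reflTransGen_of_nodeDepth_eq hacyc h hd.symm).symm

theorem eq_of_subtreeSet_eq_of_nodeDepth_eq [Finite τ] (hacyc : ∀ t, ¬ Anc D.parent t t)
    (hpart : ∀ v : V, ∃! t, v ∈ D.χ t) (hleaf : ∀ t, (∀ s, D.parent s ≠ some t) → D.χ t ≠ ∅)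
    {t t' : τ} (hd : nodeDepth D.parent t = nodeDepth D.parent t')
    (h : subtreeSet D t = subtreeSet D t') : t = t' := by
  by_contra hne
  obtain ⟨v, hv⟩ := subtreeSet_nonempty hacyc hleaf t
  exact Set.disjoint_left.mp (disjoint_subtreeSet_of_nodeDepth_eq hacyc hpart hne hd) hv (h ▸ hv)

theorem torsowidth_eq [Finite τ] (hacyc : ∀ t, ¬ Anc D.parent t t) (t : τ) :
    torsowidth D t = (D.χ t).ncard + {c | D.parent c = some t}.ncard +
      if D.parent t = none then 0 else 1 := by
  rw [torsowidth]
  cases hp : D.parent t with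
  | none => simp
  | some p =>
    have hp_child : p ∉ {c | D.parent c = some t} := fun hc =>
      hacyc t (TransGen.head (show ParentRel D.parent t p from hc) (TransGen.single hp))
    have hnbrs : {s | D.parent s = some t ∨ some p = some s} =
        insert p {c | D.parent c = some t} := by
      ext s
      simp only [Set.mem_ofPred_eq, Set.mem_insert_iff, Option.some_inj, eq_comm (a := p), or_comm]
    rw [hnbrs, Set.ncard_insert_of_notMem hp_child]
    simp [add_assoc]

end Decomposition

section Levels

variable {V τ : Type} [Finite τ] {D : PreDecomp V τ}

theorem childrenAt_levelSets (hacyc : ∀ t, ¬ Anc D.parent t t)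
    (hpart : ∀ v : V, ∃! t, v ∈ D.χ t) (hleaf : ∀ t, (∀ s, D.parent s ≠ some t) → D.χ t ≠ ∅)
    {i : ℕ} {t : τ} (hdt : nodeDepth D.parent t = treeHeight D.parent + 2 - i) :
    childrenAt (levelSets D) i (subtreeSet D t) = subtreeSet D '' {c | D.parent c = some t} := by
  have hle := nodeDepth_le_treeHeight (par := D.parent) t
  have hpos : 1 ≤ nodeDepth D.parent t := Nat.le_add_left _ _
  ext q
  constructor
  · rintro ⟨⟨c, hdc, rfl⟩, hsub⟩
    obtain ⟨v, hv⟩ := subtreeSet_nonempty hacyc hleaf c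
    rcases reflTransGen_total_of_subtreeSet_inter hpart ⟨v, hv, hsub hv⟩ with h | h
    · exact absurd (nodeDepth_le_of_reflTransGen hacyc h) (by omega)
    · exact ⟨c, parent_eq_of_reflTransGen_of_nodeDepth_eq_succ hacyc h (by omega), rfl⟩
  · rintro ⟨c, hc, rfl⟩
    have hdc := nodeDepth_of_parent_eq hacyc hc
    exact ⟨⟨c, by omega, rfl⟩, subtreeSet_subset_of_reflTransGen (ReflTransGen.single hc)⟩

theorem bagAt_levelSets (hacyc : ∀ t, ¬ Anc D.parent t t)
    (hpart : ∀ v : V, ∃! t, v ∈ D.χ t) (hleaf : ∀ t, (∀ s, D.parent s ≠ some t) → D.χ t ≠ ∅)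
    {i : ℕ} {t : τ} (hdt : nodeDepth D.parent t = treeHeight D.parent + 2 - i) :
    bagAt (levelSets D) i (subtreeSet D t) = D.χ t := by
  rw [bagAt, childrenAt_levelSets hacyc hpart hleaf hdt]
  ext v
  simp only [Set.mem_sdiff, Set.sUnion_image, Set.mem_iUnion, Set.mem_ofPred_eq, exists_prop,
    not_exists, not_and]
  constructor
  · rintro ⟨hv, hv_children⟩
    obtain ⟨s, hts, hvs⟩ := mem_subtreeSet_iff.mp hv
    rcases reflTransGen_iff_eq_or_transGen.mp hts with rfl | hts
    · exact hvs
    · obtain ⟨c, htc, hcs⟩ := TransGen.head'_iff.mp hts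
      exact absurd (mem_subtreeSet_iff.mpr ⟨s, hcs, hvs⟩) (hv_children c htc)
  · intro hv
    refine ⟨mem_subtreeSet_iff.mpr ⟨t, ReflTransGen.refl, hv⟩, fun c hc hvc => ?_⟩
    obtain ⟨s, hcs, hvs⟩ := mem_subtreeSet_iff.mp hvc
    rw [(hpart v).unique hvs hv] at hcs
    have := nodeDepth_le_of_reflTransGen hacyc hcs
    rw [nodeDepth_of_parent_eq hacyc hc] at this
    omega

theorem torAt_levelSets (hacyc : ∀ t, ¬ Anc D.parent t t)
    (hpart : ∀ v : V, ∃! t, v ∈ D.χ t) (hleaf : ∀ t, (∀ s, D.parent s ≠ some t) → D.χ t ≠ ∅)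
    {i : ℕ} {t : τ} (hdt : nodeDepth D.parent t = treeHeight D.parent + 2 - i) :
    torAt (treeHeight D.parent + 1) (levelSets D) i (subtreeSet D t) = torsowidth D t := by
  have hinj : Set.InjOn (subtreeSet D) {c | D.parent c = some t} := fun c hc c' hc' =>
    eq_of_subtreeSet_eq_of_nodeDepth_eq hacyc hpart hleaf
      (by rw [nodeDepth_of_parent_eq hacyc hc, nodeDepth_of_parent_eq hacyc hc'])
  have htop : i = treeHeight D.parent + 1 ↔ D.parent t = none := by
    have := nodeDepth_le_treeHeight (par := D.parent) t
    rw [← nodeDepth_eq_one_iff hacyc]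
    omega
  rw [torAt, bagAt_levelSets hacyc hpart hleaf hdt, childrenAt_levelSets hacyc hpart hleaf hdt,
    hinj.ncard_image, torsowidth_eq hacyc]
  simp only [htop]

theorem levelSets_one : levelSets D 1 = ∅ :=
  Set.eq_empty_of_forall_notMem fun _ ⟨t, hdt, _⟩ => by
    have := nodeDepth_le_treeHeight (par := D.parent) t
    omega

theorem levelSets_treeHeight_succ (hD : IsTCDecomp D) :
    levelSets D (treeHeight D.parent + 1) = {Set.univ} := by
  obtain ⟨hacyc, ⟨r, hr, hroot⟩, hpart⟩ := hD
  have huniv : subtreeSet D r = Set.univ :=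
    subtreeSet_eq_univ (reflTransGen_of_unique_root hacyc hroot) fun v => (hpart v).exists
  ext S
  constructor
  · rintro ⟨t, hdt, rfl⟩
    rw [hroot t ((nodeDepth_eq_one_iff hacyc).mp (by omega)), huniv]
    rfl
  · rintro rfl
    exact ⟨r, by rw [nodeDepth_of_parent_eq_none hr]; omega, huniv.symm⟩

theorem nonempty_of_mem_levelSets (hacyc : ∀ t, ¬ Anc D.parent t t)
    (hleaf : ∀ t, (∀ s, D.parent s ≠ some t) → D.χ t ≠ ∅) {i : ℕ} {p : Set V}
    (hp : p ∈ levelSets D i) : p.Nonempty := by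
  obtain ⟨t, -, rfl⟩ := hp
  exact subtreeSet_nonempty hacyc hleaf t

theorem pairwiseDisjoint_levelSets (hacyc : ∀ t, ¬ Anc D.parent t t)
    (hpart : ∀ v : V, ∃! t, v ∈ D.χ t) (i : ℕ) : (levelSets D i).PairwiseDisjoint id := by
  rintro _ ⟨t, hdt, rfl⟩ _ ⟨t', hdt', rfl⟩ hne
  exact disjoint_subtreeSet_of_nodeDepth_eq hacyc hpart (fun h => hne (h ▸ rfl))
    (hdt.trans hdt'.symm)

theorem exists_superset_mem_levelSets_succ (hacyc : ∀ t, ¬ Anc D.parent t t) {i : ℕ}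
    (hi : i ≤ treeHeight D.parent) {p : Set V} (hp : p ∈ levelSets D i) :
    ∃ q ∈ levelSets D (i + 1), p ⊆ q := by
  obtain ⟨t, hdt, rfl⟩ := hp
  have := nodeDepth_le_treeHeight (par := D.parent) t
  cases hpt : D.parent t with
  | none => rw [nodeDepth_of_parent_eq_none hpt] at hdt; omega
  | some s =>
    rw [nodeDepth_of_parent_eq hacyc hpt] at hdt this
    exact ⟨subtreeSet D s, ⟨s, by omega, rfl⟩,
      subtreeSet_subset_of_reflTransGen (ReflTransGen.single hpt)⟩

theorem isDerivation_levelSets (hD : IsTCDecomp D)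
    (hleaf : ∀ t, (∀ s, D.parent s ≠ some t) → D.χ t ≠ ∅) :
    IsDerivation (treeHeight D.parent + 1) (levelSets D) :=
  ⟨fun i _ _ => ⟨fun _ => nonempty_of_mem_levelSets hD.1 hleaf,
      pairwiseDisjoint_levelSets hD.1 hD.2.2 i⟩,
    levelSets_one, levelSets_treeHeight_succ hD,
    fun _ _ hi _ => exists_superset_mem_levelSets_succ hD.1 (Nat.le_of_lt_succ hi)⟩

theorem derWidthLE_levelSets {G : SimpleGraph V} {ω : ℕ} (hD : IsTCDecomp D)
    (hleaf : ∀ t, (∀ s, D.parent s ≠ some t) → D.χ t ≠ ∅) (hw : WidthLE G D ω) :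
    DerWidthLE G (treeHeight D.parent + 1) (levelSets D) ω := by
  rintro i - - _ ⟨t, hdt, rfl⟩
  exact ⟨(hw t).1, torAt_levelSets hD.1 hD.2.2 hleaf hdt ▸ (hw t).2⟩

end Levels

theorem tc_decomp_to_derivation_general {V τ : Type} [Finite τ] (G : SimpleGraph V)
    (D : PreDecomp V τ) (hD : IsTCDecomp D) (ω d : ℕ)
    (hw : WidthLE G D ω) (hh : ∀ t, nodeDepth D.parent t ≤ d)
    (hleaf : ∀ t, (∀ s, D.parent s ≠ some t) → D.χ t ≠ ∅) :
    IsDerivation (treeHeight D.parent + 1) (levelSets D) ∧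
    DerWidthLE G (treeHeight D.parent + 1) (levelSets D) ω ∧
    treeHeight D.parent + 1 ≤ d + 1 :=
  ⟨isDerivation_levelSets hD hleaf, derWidthLE_levelSets hD hleaf hw,
    Nat.succ_le_succ (ciSup_le' hh)⟩

/-- From a treecut decomposition `(T, χ)` of `G` of width at most `ω` and height at most `d`
with `χ t ≠ ∅` for every leaf `t`, the sequence `P_1 = ∅`,
`P_i = { V_t | t a node of height h(T) - i + 2 }` (for `2 ≤ i ≤ h(T) + 1`)
is a derivation of `G` of width at most `ω` and length at most `d + 1`. -/
theorem tc_decomp_to_derivation {V τ : Type} [Finite V] [Finite τ] (G : SimpleGraph V)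
    (D : PreDecomp V τ) (hD : IsTCDecomp D) (ω d : ℕ)
    (hw : WidthLE G D ω) (hh : ∀ t, nodeDepth D.parent t ≤ d)
    (hleaf : ∀ t, (∀ s, D.parent s ≠ some t) → D.χ t ≠ ∅) :
    IsDerivation (treeHeight D.parent + 1) (levelSets D) ∧
    DerWidthLE G (treeHeight D.parent + 1) (levelSets D) ω ∧
    treeHeight D.parent + 1 ≤ d + 1 :=
  tc_decomp_to_derivation_general G D hD ω d hw hh hleaf
end

section
/- Let S = {1,…,n} be a set of propositional variables and let k ≥ 1 be an integer. Consider the sequential counter clause set over S, which uses auxiliary variables #(s, j) for s ∈ S and 1 ≤ j ≤ k and consists of: the clause (¬s ∨ #(s,1)) for every s ∈ S; the clause (¬#(s−1, j) ∨ #(s, j)) for every s ∈ S with s > 1 and every j with 1 ≤ j ≤ k; the clause (¬s ∨ ¬#(s−1, j−1) ∨ #(s, j)) for every s ∈ S with s > 1 and every j with 1 < j ≤ k; and the clause (¬s ∨ ¬#(s−1, k)) for every s ∈ S with s > 1. Then a truth assignment τ of the variables in S can be extended to a truth assignment of the auxiliary variables #(s, j) satisfying all of these clauses if and only if the number of variables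 in S that τ sets to true is at most k. -/
private def cnt (a : ℕ → Bool) (s : ℕ) : ℕ :=
  ((Finset.Icc 1 s).filter (fun t => a t = true)).card

private lemma cnt_succ (a : ℕ → Bool) (s : ℕ) :
    cnt a (s+1) = cnt a s + (if a (s+1) = true then 1 else 0) := by
  unfold cnt
  rw [show Finset.Icc 1 (s+1) = insert (s+1) (Finset.Icc 1 s) by
        ext x; simp [Finset.mem_Icc]; omega,
      Finset.filter_insert]
  split
  · rw [Finset.card_insert_of_notMem (by simp)]
  · simp

private lemma cnt_mono (a : ℕ → Bool) {s t : ℕ} (h : s ≤ t) : cnt a s ≤ cnt a t :=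
  Finset.card_le_card (Finset.filter_subset_filter _ (Finset.Icc_subset_Icc_right h))

/-- Correctness of the sequential counter encoding: for variables `S = {1,…,n}`
(with truth assignment `a`) and `k ≥ 1`, an extension of `a` to the auxiliary counter
variables `c s j` (for `s ∈ S`, `1 ≤ j ≤ k`) satisfying all the sequential counter
clauses exists if and only if `a` sets at most `k` of the variables in `S` to true. -/
theorem sequential_counter_correct (n k : ℕ) (hk : 1 ≤ k) (a : ℕ → Bool) :
    (∃ c : ℕ → ℕ → Bool,
      -- (¬s ∨ #(s,1)) for every s ∈ S
      (∀ s, 1 ≤ s → s ≤ n → (a s = true → c s 1 = true)) ∧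
      -- (¬#(s−1,j) ∨ #(s,j)) for every s ∈ S with s > 1 and 1 ≤ j ≤ k
      (∀ s j, 2 ≤ s → s ≤ n → 1 ≤ j → j ≤ k → (c (s - 1) j = true → c s j = true)) ∧
      -- (¬s ∨ ¬#(s−1,j−1) ∨ #(s,j)) for every s ∈ S with s > 1 and 1 < j ≤ k
      (∀ s j, 2 ≤ s → s ≤ n → 2 ≤ j → j ≤ k →
        (a s = true → c (s - 1) (j - 1) = true → c s j = true)) ∧
      -- (¬s ∨ ¬#(s−1,k)) for every s ∈ S with s > 1
      (∀ s, 2 ≤ s → s ≤ n → ¬(a s = true ∧ c (s - 1) k = true))) ↔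
    ((Finset.Icc 1 n).filter (fun s => a s = true)).card ≤ k := by
  have hcnt0 : cnt a 0 = 0 := by simp [cnt]
  have hcnt1 : ∀ s, 1 ≤ s → a s = true → 1 ≤ cnt a s := by
    intro s hs ha
    have : s ∈ (Finset.Icc 1 s).filter (fun t => a t = true) := by
      simp [Finset.mem_filter, hs, ha]
    exact Finset.card_pos.mpr ⟨s, this⟩
  constructor
  · rintro ⟨c, h1, h2, h3, h4⟩
    have key : ∀ s, 1 ≤ s → s ≤ n → ∀ j, 1 ≤ j → j ≤ k → j ≤ cnt a s → c s j = true := by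
      intro s
      induction s with
      | zero => omega
      | succ m ih =>
        intro _ hsn j hj1 hjk hjc
        have hcs : cnt a (m+1) = cnt a m + (if a (m+1) = true then 1 else 0) :=
          cnt_succ a m
        rcases Nat.eq_zero_or_pos m with hm | hm
        · subst hm
          rw [hcnt0] at hcs
          simp only [Nat.zero_add] at hcs hjc
          have ha1 : a 1 = true := by
            by_contra h
            simp [h] at hcs
            omega
          have hj : j = 1 := by
            simp [ha1] at hcs
            omega
          subst hj
          exact h1 1 le_rfl (by omega) ha1
        · by_cases hc : j ≤ cnt a m
          · have hcm : c m j = true := ih hm (by omega) j hj1 hjk hc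
            have := h2 (m+1) j (by omega) hsn hj1 hjk
            simp only [Nat.add_sub_cancel] at this
            exact this hcm
          · have ham : a (m+1) = true := by
              by_contra h
              simp [h] at hcs
              omega
            rcases Nat.eq_or_lt_of_le hj1 with hj | hj
            · cases hj
              exact h1 (m+1) (by omega) hsn ham
            · have hj2 : 2 ≤ j := by omega
              have hjm : j - 1 ≤ cnt a m := by
                simp [ham] at hcs
                omega
              have hcm : c m (j-1) = true := ih hm (by omega) (j-1) (by omega) (by omega) hjm
              have := h3 (m+1) j (by omega) hsn hj2 hjk ham
              simp only [Nat.add_sub_cancel] at this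
              exact this hcm
    by_contra hlt
    push_neg at hlt
    change k < cnt a n at hlt
    have hex : ∃ s, k + 1 ≤ cnt a s := ⟨n, hlt⟩
    classical
    obtain ⟨s, hs1, hsmin⟩ : ∃ s, k + 1 ≤ cnt a s ∧ ∀ t < s, ¬ k + 1 ≤ cnt a t :=
      ⟨Nat.find hex, Nat.find_spec hex, fun t ht => Nat.find_min hex ht⟩
    have hspos : 1 ≤ s := by
      rcases Nat.eq_zero_or_pos s with h | h
      · rw [h, hcnt0] at hs1; omega
      · exact h
    obtain ⟨m, rfl⟩ : ∃ m, s = m + 1 := ⟨s - 1, by omega⟩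
    have hmlt : ¬ k + 1 ≤ cnt a m := hsmin m (by omega)
    have hsn : m + 1 ≤ n := by
      by_contra h
      have := cnt_mono a (show n ≤ m by omega)
      omega
    have hcs : cnt a (m+1) = cnt a m + (if a (m+1) = true then 1 else 0) := cnt_succ a m
    have ham : a (m+1) = true := by
      by_contra h
      simp [h] at hcs
      omega
    have hcm : cnt a m = k := by
      simp [ham] at hcs
      omega
    have hm1 : 1 ≤ m := by
      by_contra h
      have : m = 0 := by omega
      rw [this, hcnt0] at hcm; omega
    have hck : c m k = true := key m hm1 (by omega) k hk le_rfl (by omega)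
    exact h4 (m+1) (by omega) hsn ⟨ham, by simpa using hck⟩
  · intro hle
    change cnt a n ≤ k at hle
    refine ⟨fun s j => decide (1 ≤ s ∧ j ≤ cnt a s), ?_, ?_, ?_, ?_⟩
    · intro s hs hsn ha
      simp only [decide_eq_true_eq]
      exact ⟨hs, hcnt1 s hs ha⟩
    · intro s j hs hsn hj1 hjk h
      simp only [decide_eq_true_eq] at h ⊢
      exact ⟨by omega, le_trans h.2 (cnt_mono a (by omega))⟩
    · intro s j hs hsn hj2 hjk ha h
      simp only [decide_eq_true_eq] at h ⊢
      obtain ⟨m, rfl⟩ : ∃ m, s = m + 1 := ⟨s - 1, by omega⟩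
      have hcs : cnt a (m+1) = cnt a m + (if a (m+1) = true then 1 else 0) := cnt_succ a m
      simp [ha] at hcs
      refine ⟨by omega, ?_⟩
      have h2 := h.2
      simp only [Nat.add_sub_cancel] at h2
      omega
    · rintro s hs hsn ⟨ha, hck⟩
      simp only [decide_eq_true_eq] at hck
      obtain ⟨m, rfl⟩ : ∃ m, s = m + 1 := ⟨s - 1, by omega⟩
      have hcs : cnt a (m+1) = cnt a m + (if a (m+1) = true then 1 else 0) := cnt_succ a m
      simp [ha] at hcs
      have hmn := cnt_mono a (show m + 1 ≤ n from hsn)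
      have h2 := hck.2
      simp only [Nat.add_sub_cancel] at h2
      omega
end
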